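/- arXiv:1810.05855 — 3 statements merged into one kernel-verified Lean document; each statement's English description precedes it below -/
import Mathlib

section
/- Let U₁, …, U_L be real random variables in L²(P), let W = (W_{ij}) be an L×L random matrix whose entries are G-measurable, and assume W_{ij}·U_i ∈ L² and W_{ij}·U_j ∈ L² with ‖W_{ij}·U_i‖₂ ≤ K and ‖W_{ij}·U_j‖₂ ≤ K for all i, j, that the quadratic form Q := Σ_{i,j} U_i W_{ij} U_j is integrable, and that ‖U_i − E[U_i|G]‖₂ ≤ δ for all i. Then E| Q − E[Q|G] | ≤ 4·K·L²·δ. (This is the quantitative core of the paper's Lemma 1: if the responses are L²-near-epoch dependent with coefficient δ, the groupwise GEE objective q_g is L¹-near-epoch dependent with coefficient proportional to L²δ.) -/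
/-!
Conditioning on `G` is an `L¹`-contraction that fixes `G`-measurable functions, so
`‖f - E[f|G]‖₁ ≤ 2 ‖f - g‖₁` for every integrable `G`-measurable `g`. For a single term
`Uᵢ Wᵢⱼ Uⱼ` take `g = E[Wᵢⱼ Uᵢ|G] · E[Uⱼ|G]`: since `E[Wᵢⱼ Uᵢ|G] = Wᵢⱼ E[Uᵢ|G]`,
```
Uᵢ Wᵢⱼ Uⱼ - g = (Uᵢ - E[Uᵢ|G]) · Wᵢⱼ Uⱼ + E[Wᵢⱼ Uᵢ|G] · (Uⱼ - E[Uⱼ|G]),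
```
and Cauchy–Schwarz bounds each summand in `L¹` by `K δ`. Summing over the `L²` pairs
`(i, j)` gives the claim.
-/

open MeasureTheory ProbabilityTheory ENNReal Finset

section

variable {Ω : Type*} {m m₀ : MeasurableSpace Ω} {μ : Measure Ω}

lemma eLpNorm_one_mul_le_eLpNorm_two_mul {f g : Ω → ℝ} (hf : AEStronglyMeasurable f μ)
    (hg : AEStronglyMeasurable g μ) :
    eLpNorm (f * g) 1 μ ≤ eLpNorm f 2 μ * eLpNorm g 2 μ :=
  (eLpNorm_smul_le_mul_eLpNorm (p := 2) (q := 2) (r := 1) hg hf :)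

lemma MeasureTheory.MemLp.integrable_mul_mul {u v w : Ω → ℝ} (hwu : MemLp (w * u) 2 μ)
    (hv : MemLp v 2 μ) : Integrable (u * w * v) μ := by
  rw [mul_comm u w]
  exact hwu.integrable_mul hv

lemma eLpNorm_sub_condExp_le_two_mul (hm : m ≤ m₀) [SigmaFinite (μ.trim hm)] {f g : Ω → ℝ}
    (hf : Integrable f μ) (hg : StronglyMeasurable[m] g) (hgi : Integrable g μ) :
    eLpNorm (f - μ[f|m]) 1 μ ≤ 2 * eLpNorm (f - g) 1 μ := by
  have hcond : g - μ[f|m] =ᵐ[μ] μ[g - f|m] := by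
    filter_upwards [condExp_sub hgi hf m] with ω hω
    rw [hω, Pi.sub_apply, Pi.sub_apply, condExp_of_stronglyMeasurable hm hg hgi]
  calc eLpNorm (f - μ[f|m]) 1 μ = eLpNorm ((f - g) + (g - μ[f|m])) 1 μ := by
        rw [sub_add_sub_cancel]
    _ ≤ eLpNorm (f - g) 1 μ + eLpNorm (g - μ[f|m]) 1 μ :=
        eLpNorm_add_le (hf.1.sub hgi.1) (hgi.1.sub integrable_condExp.1) le_rfl
    _ ≤ eLpNorm (f - g) 1 μ + eLpNorm (g - f) 1 μ := by
        rw [eLpNorm_congr_ae hcond]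
        gcongr
        exact eLpNorm_condExp_le_eLpNorm _ le_rfl
    _ = 2 * eLpNorm (f - g) 1 μ := by rw [eLpNorm_sub_comm, two_mul]

lemma eLpNorm_sum_sub_condExp_le {ι : Type*} (s : Finset ι) (f : ι → Ω → ℝ) {p : ℝ≥0∞}
    (hp : 1 ≤ p) (hf : ∀ i ∈ s, Integrable (f i) μ) :
    eLpNorm (fun ω => ∑ i ∈ s, f i ω - μ[fun ω => ∑ i ∈ s, f i ω|m] ω) p μ ≤
      ∑ i ∈ s, eLpNorm (fun ω => f i ω - μ[f i|m] ω) p μ := by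
  have hsum : (fun ω => ∑ i ∈ s, f i ω - μ[fun ω => ∑ i ∈ s, f i ω|m] ω) =ᵐ[μ]
      ∑ i ∈ s, fun ω => f i ω - μ[f i|m] ω := by
    filter_upwards [condExp_finsetSum hf m] with ω hω
    simp only [← Finset.sum_fn] at hω ⊢
    rw [hω, Finset.sum_apply, Finset.sum_apply, Finset.sum_sub_distrib]
  rw [eLpNorm_congr_ae hsum]
  exact eLpNorm_sum_le (fun i hi => (hf i hi).1.sub integrable_condExp.1) hp

lemma eLpNorm_mul_mul_sub_condExp_mul_condExp_le (hm : m ≤ m₀) {u v w : Ω → ℝ}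
    (hw : StronglyMeasurable[m] w) (hu : Integrable u μ) (hwu : Integrable (w * u) μ)
    (hv : AEStronglyMeasurable v μ) :
    eLpNorm (u * w * v - μ[w * u|m] * μ[v|m]) 1 μ ≤
      eLpNorm (u - μ[u|m]) 2 μ * eLpNorm (w * v) 2 μ +
        eLpNorm (w * u) 2 μ * eLpNorm (v - μ[v|m]) 2 μ := by
  have hdecomp : u * w * v - μ[w * u|m] * μ[v|m] =ᵐ[μ]
      (u - μ[u|m]) * (w * v) + μ[w * u|m] * (v - μ[v|m]) := by
    filter_upwards [condExp_mul_of_stronglyMeasurable_left hw hwu hu] with ω hω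
    simp only [Pi.add_apply, Pi.sub_apply, Pi.mul_apply] at hω ⊢
    rw [hω]
    ring
  have hu' : AEStronglyMeasurable (u - μ[u|m]) μ := hu.1.sub integrable_condExp.1
  have hv' : AEStronglyMeasurable (v - μ[v|m]) μ := hv.sub integrable_condExp.1
  have hwv : AEStronglyMeasurable (w * v) μ := (hw.mono hm).aestronglyMeasurable.mul hv
  rw [eLpNorm_congr_ae hdecomp]
  refine (eLpNorm_add_le (hu'.mul hwv) (integrable_condExp.1.mul hv') le_rfl).trans ?_
  gcongr
  · exact eLpNorm_one_mul_le_eLpNorm_two_mul hu' hwv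
  · refine (eLpNorm_one_mul_le_eLpNorm_two_mul integrable_condExp.1 hv').trans ?_
    gcongr
    exact eLpNorm_condExp_le_eLpNorm _ one_le_two

lemma eLpNorm_mul_mul_sub_condExp_le [IsFiniteMeasure μ] (hm : m ≤ m₀) {u v w : Ω → ℝ}
    {K δ : ℝ≥0∞} (hw : StronglyMeasurable[m] w) (hu : MemLp u 2 μ) (hv : MemLp v 2 μ)
    (hwu : MemLp (w * u) 2 μ) (hKu : eLpNorm (w * u) 2 μ ≤ K) (hKv : eLpNorm (w * v) 2 μ ≤ K)
    (hδu : eLpNorm (u - μ[u|m]) 2 μ ≤ δ) (hδv : eLpNorm (v - μ[v|m]) 2 μ ≤ δ) :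
    eLpNorm (u * w * v - μ[u * w * v|m]) 1 μ ≤ 4 * K * δ := by
  have hZ : Integrable (μ[w * u|m] * μ[v|m]) μ :=
    (hwu.condExp one_le_two).integrable_mul (hv.condExp one_le_two)
  calc eLpNorm (u * w * v - μ[u * w * v|m]) 1 μ
      ≤ 2 * eLpNorm (u * w * v - μ[w * u|m] * μ[v|m]) 1 μ :=
        eLpNorm_sub_condExp_le_two_mul hm (hwu.integrable_mul_mul hv)
          (stronglyMeasurable_condExp.mul stronglyMeasurable_condExp) hZ
    _ ≤ 2 * (δ * K + K * δ) := by
        gcongr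
        refine (eLpNorm_mul_mul_sub_condExp_mul_condExp_le hm hw (hu.integrable one_le_two)
          (hwu.integrable one_le_two) hv.1).trans ?_
        gcongr
    _ = 4 * K * δ := by ring

end

theorem stmt2_general {Ω : Type*} {F : MeasurableSpace Ω} {P : Measure Ω}
    [IsProbabilityMeasure P] {G : MeasurableSpace Ω} (hG : G ≤ F)
    {L : ℕ} (U : Fin L → Ω → ℝ) (W : Fin L → Fin L → Ω → ℝ) (K δ : ℝ≥0∞)
    (hU : ∀ i, MemLp (U i) 2 P)
    (hWmeas : ∀ i j, StronglyMeasurable[G] (W i j))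
    (hWUi : ∀ i j, MemLp (fun ω => W i j ω * U i ω) 2 P)
    (hKi : ∀ i j, eLpNorm (fun ω => W i j ω * U i ω) 2 P ≤ K)
    (hKj : ∀ i j, eLpNorm (fun ω => W i j ω * U j ω) 2 P ≤ K)
    (hδ : ∀ i, eLpNorm (fun ω => U i ω - (P[U i|G]) ω) 2 P ≤ δ) :
    eLpNorm (fun ω => (∑ i, ∑ j, U i ω * W i j ω * U j ω) -
        (P[fun ω => ∑ i, ∑ j, U i ω * W i j ω * U j ω|G]) ω) 1 P ≤
      4 * K * (L : ℝ≥0∞) ^ 2 * δ := by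
  have hint : ∀ i j, Integrable (U i * W i j * U j) P := fun i j =>
    (hWUi i j).integrable_mul_mul (hU j)
  calc _ ≤ ∑ i, eLpNorm (fun ω => ∑ j, U i ω * W i j ω * U j ω -
          P[fun ω => ∑ j, U i ω * W i j ω * U j ω|G] ω) 1 P :=
        eLpNorm_sum_sub_condExp_le univ (fun i ω => ∑ j, U i ω * W i j ω * U j ω) le_rfl
          fun i _ => integrable_finsetSum _ fun j _ => hint i j
    _ ≤ ∑ i, ∑ j, eLpNorm (U i * W i j * U j - P[U i * W i j * U j|G]) 1 P := by
        gcongr with i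
        exact eLpNorm_sum_sub_condExp_le univ (fun j => U i * W i j * U j) le_rfl
          fun j _ => hint i j
    _ ≤ ∑ _i : Fin L, ∑ _j : Fin L, 4 * K * δ := by
        gcongr with i _ j
        exact eLpNorm_mul_mul_sub_condExp_le hG (hWmeas i j) (hU i) (hU j) (hWUi i j) (hKi i j)
          (hKj i j) (hδ i) (hδ j)
    _ = 4 * K * (L : ℝ≥0∞) ^ 2 * δ := by
        simp only [sum_const, card_univ, Fintype.card_fin, nsmul_eq_mul]
        ring

/-- If `U₁, …, U_L ∈ L²`, the entries of the `L×L` random matrix `W` are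
`G`-measurable with `‖W i j · U i‖₂ ≤ K` and `‖W i j · U j‖₂ ≤ K`, the quadratic form
`Q = Σᵢⱼ Uᵢ W_{ij} Uⱼ` is integrable and `‖Uᵢ − E[Uᵢ|G]‖₂ ≤ δ` for all `i`, then
`E|Q − E[Q|G]| ≤ 4·K·L²·δ`. -/
theorem stmt2 {Ω : Type*} {F : MeasurableSpace Ω} {P : Measure Ω}
    [IsProbabilityMeasure P] {G : MeasurableSpace Ω} (hG : G ≤ F)
    {L : ℕ} (U : Fin L → Ω → ℝ) (W : Fin L → Fin L → Ω → ℝ) (K δ : ℝ≥0∞)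
    (hU : ∀ i, MemLp (U i) 2 P)
    (hWmeas : ∀ i j, StronglyMeasurable[G] (W i j))
    (hWUi : ∀ i j, MemLp (fun ω => W i j ω * U i ω) 2 P)
    (hWUj : ∀ i j, MemLp (fun ω => W i j ω * U j ω) 2 P)
    (hKi : ∀ i j, eLpNorm (fun ω => W i j ω * U i ω) 2 P ≤ K)
    (hKj : ∀ i j, eLpNorm (fun ω => W i j ω * U j ω) 2 P ≤ K)
    (hQint : Integrable (fun ω => ∑ i, ∑ j, U i ω * W i j ω * U j ω) P)
    (hδ : ∀ i, eLpNorm (fun ω => U i ω - (P[U i|G]) ω) 2 P ≤ δ) :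
    eLpNorm (fun ω => (∑ i, ∑ j, U i ω * W i j ω * U j ω) -
        (P[fun ω => ∑ i, ∑ j, U i ω * W i j ω * U j ω|G]) ω) 1 P ≤
      4 * K * (L : ℝ≥0∞) ^ 2 * δ :=
  stmt2_general hG U W K δ hU hWmeas hWUi hKi hKj hδ
end

section
/- Let Y* ∈ L²(P) be a real random variable, G ⊆ F a sub-σ-algebra, and ε > 0. Then ‖1{Y* ≥ 0} − E[1{Y* ≥ 0}|G]‖₂ ≤ (1/ε)·‖Y* − E[Y*|G]‖₂ + P( |Y*| < ε and |E[Y*|G]| < ε )^{1/2}. (This is the L² near-epoch-dependence bound for the Probit response established in the paper's appendix, obtained by comparing E[1{Y*≥0}|G] with the G-measurable approximation 1{E[Y*|G] ≥ 0} via the L²-projection property of conditional expectation.) -/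
/-!
Since `1{E[Y*|G] ≥ 0}` is `G`-measurable, the `L²`-minimality of conditional expectation bounds
the left-hand side by `‖1{Y* ≥ 0} − 1{E[Y*|G] ≥ 0}‖₂`. The two indicators differ only where `Y*`
and `E[Y*|G]` have opposite signs; there either both lie in `(−ε, ε)`, or `|Y* − E[Y*|G]| ≥ ε`.
Hence `|1{Y* ≥ 0} − 1{E[Y*|G] ≥ 0}| ≤ ε⁻¹|Y* − E[Y*|G]| + 1{|Y*| < ε, |E[Y*|G]| < ε}` pointwise,
and Minkowski's inequality concludes.
-/

open MeasureTheory ProbabilityTheory ENNReal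

section ConditionalExpectation

variable {Ω E : Type*} [NormedAddCommGroup E] [InnerProductSpace ℝ E] [CompleteSpace E]
  {m m₀ : MeasurableSpace Ω} {μ : Measure Ω}

theorem norm_sub_condExpL2_le (hm : m ≤ m₀) (f : Ω →₂[μ] E) {g : Ω →₂[μ] E}
    (hg : AEStronglyMeasurable[m] g μ) :
    ‖f - condExpL2 E ℝ hm f‖ ≤ ‖f - g‖ := by
  have : Fact (m ≤ m₀) := ⟨hm⟩
  let g' : lpMeas E ℝ m 2 μ := ⟨g, mem_lpMeas_iff_aestronglyMeasurable.2 hg⟩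
  calc ‖f - condExpL2 E ℝ hm f‖ = ⨅ x : lpMeas E ℝ m 2 μ, ‖f - x‖ :=
        Submodule.starProjection_minimal f
    _ ≤ ‖f - g'‖ := ciInf_le ⟨0, Set.forall_mem_range.2 fun _ ↦ norm_nonneg _⟩ g'

theorem eLpNorm_sub_condExp_le [IsFiniteMeasure μ] (hm : m ≤ m₀) {f g : Ω → E}
    (hf : MemLp f 2 μ) (hg : MemLp g 2 μ) (hgm : AEStronglyMeasurable[m] g μ) :
    eLpNorm (f - μ[f|m]) 2 μ ≤ eLpNorm (f - g) 2 μ :=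
  calc eLpNorm (f - μ[f|m]) 2 μ
      = edist (hf.toLp f) (condExpL2 E ℝ hm hf.toLp : Ω →₂[μ] E) := by
        rw [Lp.edist_def]
        exact eLpNorm_congr_ae (hf.coeFn_toLp.sub (hf.condExpL2_ae_eq_condExp hm)).symm
    _ ≤ edist (hf.toLp f) (hg.toLp g) := by
        rw [edist_dist, edist_dist, dist_eq_norm, dist_eq_norm]
        exact ENNReal.ofReal_le_ofReal <| norm_sub_condExpL2_le hm _ <|
          hgm.congr hg.coeFn_toLp.symm
    _ = eLpNorm (f - g) 2 μ := Lp.edist_toLp_toLp f g hf hg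

end ConditionalExpectation

theorem measurable_ite_nonneg : Measurable fun x : ℝ ↦ if 0 ≤ x then (1 : ℝ) else 0 :=
  measurable_const.ite measurableSet_Ici measurable_const

theorem memLp_ite_nonneg {Ω : Type*} {m₀ : MeasurableSpace Ω} {μ : Measure Ω}
    [IsFiniteMeasure μ] {f : Ω → ℝ} (hf : AEMeasurable f μ) (p : ℝ≥0∞) :
    MemLp (fun ω ↦ if 0 ≤ f ω then (1 : ℝ) else 0) p μ := by
  refine MemLp.of_bound (measurable_ite_nonneg.comp_aemeasurable hf).aestronglyMeasurable 1
    (ae_of_all _ fun ω ↦ ?_)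
  split_ifs <;> simp

theorem abs_ite_nonneg_sub_ite_nonneg_le {y e ε : ℝ} (hε : 0 < ε) :
    |(if 0 ≤ y then (1 : ℝ) else 0) - (if 0 ≤ e then 1 else 0)| ≤
      ε⁻¹ * |y - e| + if |y| < ε ∧ |e| < ε then 1 else 0 := by
  have hfar (hsign : ¬(0 ≤ y ↔ 0 ≤ e)) (hbig : ¬(|y| < ε ∧ |e| < ε)) :
      1 ≤ ε⁻¹ * |y - e| := by
    rw [one_le_inv_mul₀ hε]
    rw [not_and_or, not_lt, not_lt] at hbig
    rcases le_or_gt 0 y with hy | hy <;> rcases le_or_gt 0 e with he | he <;>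
      simp only [hy, he, true_iff, iff_true, not_le.2, not_true, not_false_iff] at hsign <;>
      rcases hbig with h | h <;> cases abs_cases y <;> cases abs_cases e <;>
      cases abs_cases (y - e) <;> linarith
  by_cases hsign : 0 ≤ y ↔ 0 ≤ e
  · rw [if_congr hsign rfl rfl, sub_self, abs_zero]
    positivity
  · split_ifs <;> simp_all

/-- For `Y* ∈ L²(P)`, a sub-σ-algebra `G` and `ε > 0`,
`‖1{Y* ≥ 0} − E[1{Y* ≥ 0}|G]‖₂ ≤ (1/ε)·‖Y* − E[Y*|G]‖₂ + P(|Y*| < ε ∧ |E[Y*|G]| < ε)^{1/2}`. -/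
theorem stmt13 {Ω : Type*} {F : MeasurableSpace Ω} {P : Measure Ω}
    [IsProbabilityMeasure P] {G : MeasurableSpace Ω} (hG : G ≤ F)
    (Y : Ω → ℝ) (hY : MemLp Y 2 P) (ε : ℝ) (hε : 0 < ε) :
    eLpNorm (fun ω => (if 0 ≤ Y ω then (1 : ℝ) else 0) -
        (P[fun ω => if 0 ≤ Y ω then (1 : ℝ) else 0|G]) ω) 2 P ≤
      ENNReal.ofReal (1 / ε) * eLpNorm (fun ω => Y ω - (P[Y|G]) ω) 2 P +
        (P {ω | |Y ω| < ε ∧ |(P[Y|G]) ω| < ε}) ^ (1/2 : ℝ) := by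
  set E := P[Y|G]
  set A := {ω | |Y ω| < ε ∧ |E ω| < ε}
  have hEG : StronglyMeasurable[G] E := stronglyMeasurable_condExp
  have hE : StronglyMeasurable[F] E := hEG.mono hG
  calc _ ≤ eLpNorm (fun ω ↦ (if 0 ≤ Y ω then (1 : ℝ) else 0) - if 0 ≤ E ω then 1 else 0) 2 P :=
        eLpNorm_sub_condExp_le hG (memLp_ite_nonneg hY.1.aemeasurable 2)
          (memLp_ite_nonneg hE.measurable.aemeasurable 2)
          (measurable_ite_nonneg.comp hEG.measurable).aestronglyMeasurable
    _ ≤ eLpNorm ((ε⁻¹ • fun ω ↦ ‖Y ω - E ω‖) + A.indicator fun _ ↦ 1) 2 P :=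
        eLpNorm_mono_real fun ω ↦ by
          simpa [Set.indicator_apply, A] using
            abs_ite_nonneg_sub_ite_nonneg_le (y := Y ω) (e := E ω) hε
    _ ≤ eLpNorm (ε⁻¹ • fun ω ↦ ‖Y ω - E ω‖) 2 P + eLpNorm (A.indicator fun _ ↦ (1 : ℝ)) 2 P :=
        eLpNorm_add_le ((hY.1.sub hE.aestronglyMeasurable).norm.const_smul _)
          (aestronglyMeasurable_const.indicator₀ <|
            (hY.1.norm.nullMeasurableSet_lt aestronglyMeasurable_const).inter
              (hE.aestronglyMeasurable.norm.nullMeasurableSet_lt aestronglyMeasurable_const))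
          one_le_two
    _ ≤ _ := by
        gcongr
        · rw [eLpNorm_const_smul, eLpNorm_norm, Real.enorm_eq_ofReal (by positivity), one_div]
        · simpa using eLpNorm_indicator_const_le (μ := P) (s := A) (1 : ℝ) 2
end

section
/- Let Y* ∈ L²(P) be a real random variable and G ⊆ F a sub-σ-algebra. Suppose there is a constant C ≥ 0 such that P(|Y*| < ε) ≤ C·ε for every ε > 0, and set δ := ‖Y* − E[Y*|G]‖₂. If δ > 0 then ‖1{Y* ≥ 0} − E[1{Y* ≥ 0}|G]‖₂ ≤ (1 + √C)·δ^{1/3}. (This quantifies the paper's conclusion that the binary Probit response inherits uniform L²-near-epoch dependence from the latent process, with NED coefficient a power of that of the latent process.) -/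
open MeasureTheory ProbabilityTheory ENNReal
open scoped symmDiff

/-!
Conditional expectation is the `L²`-projection onto `G`-measurable functions, so
`‖1{Y ≥ 0} - E[1{Y ≥ 0}|G]‖₂ ≤ ‖1{Y ≥ 0} - 1{E[Y|G] ≥ 0}‖₂ = P(A)^{1/2}`, where `A` is the event
that `Y` and `E[Y|G]` have different signs. On `A`, either `|Y| < ε` or `|Y - E[Y|G]| ≥ ε`, so
`P(A) ≤ Cε + δ²/ε²` by the small-ball bound and Chebyshev; take `ε = δ^{2/3}`.
-/

lemma ENNReal.sq_div_rpow_two_thirds_sq {x : ℝ≥0∞} (hx0 : x ≠ 0) (hx : x ≠ ∞) :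
    x ^ 2 / (x ^ (2 / 3 : ℝ)) ^ 2 = x ^ (2 / 3 : ℝ) := by
  symm
  rw [ENNReal.eq_div_iff (pow_ne_zero _ (rpow_pos (pos_iff_ne_zero.2 hx0) hx).ne')
    (pow_ne_top (rpow_ne_top_of_nonneg (by norm_num) hx)), ← rpow_natCast, ← rpow_mul,
    ← rpow_add _ _ hx0 hx, ← rpow_natCast]
  norm_num

lemma ENNReal.ofReal_add_one_rpow_half_le (C : ℝ) :
    (ENNReal.ofReal C + 1) ^ (1 / 2 : ℝ) ≤ ENNReal.ofReal (1 + √C) := by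
  have hC : ENNReal.ofReal C + 1 = ENNReal.ofReal (√C ^ 2 + 1) := by
    rw [ofReal_add (sq_nonneg _) zero_le_one, Real.sq_sqrt', ofReal_max, ofReal_zero,
      max_eq_left zero_le, ofReal_one]
  rw [hC, ofReal_rpow_of_nonneg (by positivity) (by norm_num), ← Real.sqrt_eq_rpow]
  refine ofReal_le_ofReal (Real.sqrt_le_iff.2 ⟨by positivity, ?_⟩)
  nlinarith [Real.sqrt_nonneg C]

namespace MeasureTheory

variable {Ω : Type*} {m m₀ : MeasurableSpace Ω} {μ : Measure Ω}

lemma MemLp.eLpNorm_two_sq_eq {f : Ω → ℝ} (hf : MemLp f 2 μ) :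
    eLpNorm f 2 μ ^ 2 = ENNReal.ofReal (∫ ω, f ω ^ 2 ∂μ) := by
  rw [hf.eLpNorm_eq_integral_rpow_norm two_ne_zero ofNat_ne_top, ← ofReal_pow (by positivity)]
  simp only [toReal_ofNat, Real.rpow_two, Real.norm_eq_abs, sq_abs]
  congr 1
  exact Real.rpow_inv_natCast_pow (n := 2) (integral_nonneg fun _ => sq_nonneg _) two_ne_zero

lemma memLp_indicator_const₀ [IsFiniteMeasure μ] {E : Type*} [NormedAddCommGroup E]
    (p : ℝ≥0∞) {s : Set Ω} (hs : NullMeasurableSet s μ) (c : E) :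
    MemLp (s.indicator fun _ => c) p μ :=
  MemLp.of_bound (aestronglyMeasurable_const.indicator₀ hs) ‖c‖
    (ae_of_all _ fun ω => norm_indicator_le_norm_self _ ω)

lemma integral_sq_sub_condExp_le (hm : m ≤ m₀) [IsFiniteMeasure μ] {X : Ω → ℝ}
    (hX : MemLp X 2 μ) : ∫ ω, (X - μ[X|m]) ω ^ 2 ∂μ ≤ ∫ ω, X ω ^ 2 ∂μ :=
  calc ∫ ω, (X - μ[X|m]) ω ^ 2 ∂μ = ∫ ω, Var[X; μ | m] ω ∂μ := (integral_condExp hm).symm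
    _ ≤ ∫ ω, (μ[X ^ 2|m]) ω ∂μ :=
      integral_mono_ae integrable_condVar integrable_condExp (condVar_ae_le_condExp_sq hm hX)
    _ = ∫ ω, X ω ^ 2 ∂μ := integral_condExp hm

lemma eLpNorm_sub_condExp_le (hm : m ≤ m₀) [IsFiniteMeasure μ] {X : Ω → ℝ}
    (hX : MemLp X 2 μ) : eLpNorm (X - μ[X|m]) 2 μ ≤ eLpNorm X 2 μ := by
  rw [← ENNReal.pow_le_pow_left_iff two_ne_zero, hX.eLpNorm_two_sq_eq,
    (hX.sub (hX.condExp one_le_two)).eLpNorm_two_sq_eq]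
  exact ofReal_le_ofReal (integral_sq_sub_condExp_le hm hX)

lemma eLpNorm_sub_condExp_le_eLpNorm_sub (hm : m ≤ m₀) [IsFiniteMeasure μ] {X Z : Ω → ℝ}
    (hX : MemLp X 2 μ) (hZ : StronglyMeasurable[m] Z) (hZ2 : MemLp Z 2 μ) :
    eLpNorm (X - μ[X|m]) 2 μ ≤ eLpNorm (X - Z) 2 μ := by
  have : X - μ[X|m] =ᵐ[μ] (X - Z) - μ[X - Z|m] := by
    filter_upwards [condExp_sub (m := m) (hX.integrable one_le_two) (hZ2.integrable one_le_two)]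
      with ω hω
    simp only [Pi.sub_apply] at hω ⊢
    rw [hω, condExp_of_stronglyMeasurable hm hZ (hZ2.integrable one_le_two)]
    ring
  rw [eLpNorm_congr_ae this]
  exact eLpNorm_sub_condExp_le hm (hX.sub hZ2)

lemma symmDiff_setOf_nonneg_subset (Y Z : Ω → ℝ) (ε : ℝ) :
    {ω | 0 ≤ Y ω} ∆ {ω | 0 ≤ Z ω} ⊆ {ω | |Y ω| < ε} ∪ {ω | ε ≤ |Y ω - Z ω|} := by
  intro ω hω
  by_contra h
  simp only [Set.mem_symmDiff, Set.mem_ofPred_eq, Set.mem_union, not_or, not_lt, not_le] at hω h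
  grind [abs_of_nonneg, abs_of_neg, abs_lt]

lemma measure_symmDiff_setOf_nonneg_le {Y Z : Ω → ℝ} (hYZ : AEStronglyMeasurable (Y - Z) μ)
    {ε : ℝ} (hε : 0 < ε) :
    μ ({ω | 0 ≤ Y ω} ∆ {ω | 0 ≤ Z ω}) ≤
      μ {ω | |Y ω| < ε} + eLpNorm (Y - Z) 2 μ ^ 2 / ENNReal.ofReal ε ^ 2 := by
  have hchebyshev := meas_ge_le_mul_pow_eLpNorm_enorm μ two_ne_zero ofNat_ne_top hYZ
    (ofReal_pos.2 hε).ne' (fun h => absurd h ofReal_ne_top)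
  have hset : {ω | ε ≤ |Y ω - Z ω|} = {ω | ENNReal.ofReal ε ≤ ‖(Y - Z) ω‖ₑ} := by
    ext ω
    simp [Real.enorm_eq_ofReal_abs, ofReal_le_ofReal_iff (abs_nonneg _)]
  calc μ ({ω | 0 ≤ Y ω} ∆ {ω | 0 ≤ Z ω})
      ≤ μ ({ω | |Y ω| < ε} ∪ {ω | ε ≤ |Y ω - Z ω|}) :=
        measure_mono (symmDiff_setOf_nonneg_subset Y Z ε)
    _ ≤ μ {ω | |Y ω| < ε} + μ {ω | ε ≤ |Y ω - Z ω|} := measure_union_le _ _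
    _ ≤ μ {ω | |Y ω| < ε} + eLpNorm (Y - Z) 2 μ ^ 2 / ENNReal.ofReal ε ^ 2 := by
        rw [hset]
        gcongr
        simpa [div_eq_mul_inv, mul_comm, ENNReal.inv_pow] using hchebyshev

lemma measure_symmDiff_setOf_nonneg_le_of_eLpNorm_eq {Y Z : Ω → ℝ}
    (hYZ : AEStronglyMeasurable (Y - Z) μ) {C : ℝ}
    (hsmall : ∀ ε : ℝ, 0 < ε → μ {ω | |Y ω| < ε} ≤ ENNReal.ofReal (C * ε))
    {δ : ℝ≥0∞} (hδ : eLpNorm (Y - Z) 2 μ = δ) (hδ0 : δ ≠ 0) (hδtop : δ ≠ ∞) :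
    μ ({ω | 0 ≤ Y ω} ∆ {ω | 0 ≤ Z ω}) ≤ (ENNReal.ofReal C + 1) * δ ^ (2 / 3 : ℝ) := by
  have hε_top : δ ^ (2 / 3 : ℝ) ≠ ∞ := rpow_ne_top_of_nonneg (by norm_num) hδtop
  set ε := (δ ^ (2 / 3 : ℝ)).toReal
  have hε : ENNReal.ofReal ε = δ ^ (2 / 3 : ℝ) := ofReal_toReal hε_top
  have hεpos : 0 < ε := toReal_pos (rpow_pos (pos_iff_ne_zero.2 hδ0) hδtop).ne' hε_top
  calc μ ({ω | 0 ≤ Y ω} ∆ {ω | 0 ≤ Z ω})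
      ≤ μ {ω | |Y ω| < ε} + eLpNorm (Y - Z) 2 μ ^ 2 / ENNReal.ofReal ε ^ 2 :=
        measure_symmDiff_setOf_nonneg_le hYZ hεpos
    _ ≤ ENNReal.ofReal C * δ ^ (2 / 3 : ℝ) + δ ^ (2 / 3 : ℝ) := by
        rw [hδ, hε, ENNReal.sq_div_rpow_two_thirds_sq hδ0 hδtop, ← hε, ← ofReal_mul' hεpos.le]
        gcongr
        exact hsmall ε hεpos
    _ = (ENNReal.ofReal C + 1) * δ ^ (2 / 3 : ℝ) := by ring

end MeasureTheory

theorem stmt14_general {Ω : Type*} {F : MeasurableSpace Ω} {P : Measure Ω}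
    [IsProbabilityMeasure P] {G : MeasurableSpace Ω} (hG : G ≤ F)
    (Y : Ω → ℝ) (hY : MemLp Y 2 P) (C : ℝ)
    (hsmall : ∀ ε : ℝ, 0 < ε → P {ω | |Y ω| < ε} ≤ ENNReal.ofReal (C * ε))
    (δ : ℝ≥0∞) (hδ : eLpNorm (fun ω => Y ω - (P[Y|G]) ω) 2 P = δ)
    (hδpos : 0 < δ) :
    eLpNorm (fun ω => (if 0 ≤ Y ω then (1 : ℝ) else 0) -
        (P[fun ω => if 0 ≤ Y ω then (1 : ℝ) else 0|G]) ω) 2 P ≤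
      ENNReal.ofReal (1 + Real.sqrt C) * δ ^ (1/3 : ℝ) := by
  rcases eq_or_ne δ ∞ with rfl | hδtop
  · rw [top_rpow_of_pos (by norm_num), mul_top (ofReal_pos.2 (by positivity)).ne']
    exact le_top
  set A := {ω | 0 ≤ Y ω}
  set B := {ω | 0 ≤ (P[Y|G]) ω}
  have hA : (fun ω => if 0 ≤ Y ω then (1 : ℝ) else 0) = A.indicator fun _ => 1 := by
    ext ω
    simp [A, Set.indicator_apply]
  have hB : MeasurableSet[G] B :=
    measurableSet_le measurable_const stronglyMeasurable_condExp.measurable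
  rw [hA]
  calc _ ≤ eLpNorm ((A.indicator fun _ => 1) - B.indicator fun _ => (1 : ℝ)) 2 P :=
        eLpNorm_sub_condExp_le_eLpNorm_sub hG
          (memLp_indicator_const₀ 2 (nullMeasurableSet_le aemeasurable_const hY.1.aemeasurable) 1)
          (stronglyMeasurable_const.indicator hB)
          (memLp_indicator_const₀ 2 (hG _ hB).nullMeasurableSet 1)
    _ = eLpNorm ((A ∆ B).indicator fun _ => (1 : ℝ)) 2 P := eLpNorm_indicator_sub_indicator _ _ _
    _ ≤ P (A ∆ B) ^ (1 / 2 : ℝ) := by simpa using eLpNorm_indicator_const_le (c := (1 : ℝ)) 2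
    _ ≤ ((ENNReal.ofReal C + 1) * δ ^ (2 / 3 : ℝ)) ^ (1 / 2 : ℝ) := by
        gcongr
        exact measure_symmDiff_setOf_nonneg_le_of_eLpNorm_eq
          (hY.sub (hY.condExp one_le_two)).1 hsmall hδ hδpos.ne' hδtop
    _ = (ENNReal.ofReal C + 1) ^ (1 / 2 : ℝ) * δ ^ (1 / 3 : ℝ) := by
        rw [mul_rpow_of_nonneg _ _ (by norm_num), ← rpow_mul]
        norm_num
    _ ≤ ENNReal.ofReal (1 + √C) * δ ^ (1 / 3 : ℝ) := by
        gcongr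
        exact ENNReal.ofReal_add_one_rpow_half_le C

/-- Let `Y* ∈ L²(P)` and suppose `P(|Y*| < ε) ≤ C·ε` for every `ε > 0`.
Set `δ := ‖Y* − E[Y*|G]‖₂`. If `δ > 0` then
`‖1{Y* ≥ 0} − E[1{Y* ≥ 0}|G]‖₂ ≤ (1 + √C)·δ^{1/3}`. -/
theorem stmt14 {Ω : Type*} {F : MeasurableSpace Ω} {P : Measure Ω}
    [IsProbabilityMeasure P] {G : MeasurableSpace Ω} (hG : G ≤ F)
    (Y : Ω → ℝ) (hY : MemLp Y 2 P) (C : ℝ) (hC : 0 ≤ C)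
    (hsmall : ∀ ε : ℝ, 0 < ε → P {ω | |Y ω| < ε} ≤ ENNReal.ofReal (C * ε))
    (δ : ℝ≥0∞) (hδ : eLpNorm (fun ω => Y ω - (P[Y|G]) ω) 2 P = δ)
    (hδpos : 0 < δ) :
    eLpNorm (fun ω => (if 0 ≤ Y ω then (1 : ℝ) else 0) -
        (P[fun ω => if 0 ≤ Y ω then (1 : ℝ) else 0|G]) ω) 2 P ≤
      ENNReal.ofReal (1 + Real.sqrt C) * δ ^ (1/3 : ℝ) :=
  stmt14_general hG Y hY C hsmall δ hδ hδpos
end
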